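/- For chores (all utilities strictly negative), the outcome of sequential allocation under a recursively balanced sequence that is not round-robin can fail to be EF1: specifically, with 2 agents and the picking sequence A,B,B, there exist strictly negative utilities such that agent B EF1-envies agent A in the resulting allocation. -/
import Mathlib


open Finset

/-- Sequential allocation for chores: on each turn the active agent picks a remaining item
of maximum (least negative) utility. -/
def seqValid16 {A O : Type*} [DecidableEq O] (u : A → O → ℝ) :
    List A → List O → Finset O → Prop
  | [], [], _ => True
  | a :: s, o :: ps, rem =>
      o ∈ rem ∧ (∀ o' ∈ rem, u a o' ≤ u a o) ∧ seqValid16 u s ps (rem.erase o)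
  | _, _, _ => False

/-- The bundle of items picked by agent `i` in the run `(seq, picks)`. -/
def bundle16 {A O : Type*} [DecidableEq A] [DecidableEq O]
    (seq : List A) (picks : List O) (i : A) : Finset O :=
  ((seq.zip picks).filterMap (fun x => if x.1 = i then some x.2 else none)).toFinset

/-- For chores, the recursively balanced but non-round-robin picking sequence `A,B,B` can
fail EF1: there are strictly negative utilities such that, in any resulting allocation,
agent `B` EF1-envies agent `A` (no single item removed from `B`'s own bundle eliminates
the envy). -/
theorem stmt16 :
    ∃ u : Fin 2 → Fin 3 → ℝ, (∀ i o, u i o < 0) ∧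
      ∃ picks : List (Fin 3),
        seqValid16 u [0, 1, 1] picks Finset.univ ∧
        ¬ ∃ o ∈ bundle16 [0, 1, 1] picks 1,
            ∑ o' ∈ bundle16 [0, 1, 1] picks 0, u 1 o' ≤
              ∑ o' ∈ (bundle16 [0, 1, 1] picks 1).erase o, u 1 o' := by
  refine ⟨fun _ => ![(-1 : ℝ), -2, -4], ?_, [0, 1, 2], ?_, ?_⟩
  · intro i o; fin_cases o <;> norm_num
  · refine ⟨by simp, ?_, by simp, ?_, by simp, ?_, trivial⟩ <;>
      · intro o' ho'; fin_cases o' <;> simp_all <;> norm_num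
  · rintro ⟨o, ho, h⟩
    simp only [bundle16] at ho h
    fin_cases o <;> simp_all [List.filterMap, Finset.sum_insert, Finset.erase_insert]
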